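/- arXiv:2009.13870 — 2 statements merged into one kernel-verified Lean document; each statement's English description precedes it below -/
import Mathlib

section
/- Let V be a ℚ-vector space regarded as an additive abelian group, S an abelian group (written multiplicatively), and f : S → V a surjective group homomorphism. Assume every element x ∈ S admits a coherent system of roots, i.e. a function (x_n)_{n ≥ 1} in S with x_1 = x and (x_{kl})^k = x_l for all k, l ≥ 1. Then for every finitely generated subgroup G ≤ V and every group homomorphism s : G → S with f ∘ s = id_G, there exists a group homomorphism s' : V → S extending s with f ∘ s' = id_V. -/
/-!
The finitely generated torsion-free group `G` is free, and a `ℤ`-basis of it is `ℚ`-linearly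
independent in `V`, so it extends to a `ℚ`-basis `B` of `V`. Lift every element of `B` through
`f`, by `s` when it lies in `G`. A coherent system of roots `(r n)` of a lift turns into an
additive map `ℚ → S`, `a / n ↦ r n ^ a`, sending `1` to the lift, and these maps glue along
the coordinates of `B` to an additive map `s' : V → S`. Then `f ∘ s'` is additive, hence
`ℚ`-linear, and fixes `B`, so it is the identity; and `s'` agrees with `s` on the
`ℤ`-basis of `G`, hence on `G`.
-/

open Module

section CoherentRoots

variable {A : Type*} [AddCommGroup A]

theorem zsmul_root_eq_of_mul_eq {r : ℕ+ → A} (hr : ∀ k l : ℕ+, (k : ℕ) • r (k * l) = r l)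
    {a a' : ℤ} {b b' : ℕ+} (h : a * b' = a' * b) : a • r b = a' • r b' := by
  have hb : r b = (b' : ℤ) • r (b' * b) := by rw [natCast_zsmul, hr]
  have hb' : r b' = (b : ℤ) • r (b' * b) := by rw [natCast_zsmul, mul_comm, hr]
  rw [hb, hb', smul_smul, smul_smul, h]

theorem num_zsmul_root_pnatDen_eq {r : ℕ+ → A} (hr : ∀ k l : ℕ+, (k : ℕ) • r (k * l) = r l)
    {q : ℚ} {a : ℤ} {b : ℕ+} (h : q * (b : ℕ) = a) : q.num • r q.pnatDen = a • r b := by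
  refine zsmul_root_eq_of_mul_eq hr ?_
  have hnum := Rat.mul_den_eq_num q
  rw [Rat.coe_pnatDen]
  exact_mod_cast (by linear_combination q.den * h - (b : ℚ) * hnum :
    (q.num : ℚ) * (b : ℕ) = a * q.den)

def ratHomOfCoherentRoots (r : ℕ+ → A) (hr : ∀ k l : ℕ+, (k : ℕ) • r (k * l) = r l) : ℚ →+ A :=
  AddMonoidHom.mk' (fun q => q.num • r q.pnatDen) fun p q => by
    have hp := Rat.mul_den_eq_num p
    have hq := Rat.mul_den_eq_num q
    have hd : (((p.pnatDen * q.pnatDen : ℕ+) : ℕ) : ℚ) = p.den * q.den := by simp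
    rw [num_zsmul_root_pnatDen_eq hr (a := p.num * q.den + q.num * p.den)
        (by rw [hd]; push_cast; linear_combination q.den * hp + p.den * hq),
      num_zsmul_root_pnatDen_eq hr (a := p.num * q.den)
        (by rw [hd]; push_cast; linear_combination q.den * hp),
      num_zsmul_root_pnatDen_eq hr (a := q.num * p.den)
        (by rw [hd]; push_cast; linear_combination p.den * hq),
      add_smul]

theorem ratHomOfCoherentRoots_one (r : ℕ+ → A) (hr : ∀ k l : ℕ+, (k : ℕ) • r (k * l) = r l) :
    ratHomOfCoherentRoots r hr 1 = r 1 := by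
  simp [ratHomOfCoherentRoots]

end CoherentRoots

theorem Module.Basis.exists_addMonoidHom_apply_eq {ι V A : Type*} [AddCommGroup V] [Module ℚ V]
    [AddCommGroup A] (B : Basis ι ℚ V) (a : ι → A) (ha : ∀ i, ∃ ℓ : ℚ →+ A, ℓ 1 = a i) :
    ∃ σ : V →+ A, ∀ i, σ (B i) = a i := by
  choose ℓ hℓ using ha
  exact ⟨(Finsupp.liftAddHom ℓ).comp B.repr.toAddMonoidHom, fun i => by simp [hℓ]⟩

theorem Module.Basis.addMonoidHom_ext_rat {ι V W : Type*} [AddCommGroup V] [Module ℚ V]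
    [AddCommGroup W] [Module ℚ W] (B : Basis ι ℚ V) {φ ψ : V →+ W}
    (h : ∀ i, φ (B i) = ψ (B i)) : φ = ψ :=
  AddMonoidHom.toRatLinearMap_injective (B.ext h)

theorem Module.Basis.addMonoidHom_ext_int {ι M N : Type*} [AddCommGroup M] [AddCommGroup N]
    (b : Basis ι ℤ M) {φ ψ : M →+ N} (h : ∀ i, φ (b i) = ψ (b i)) : φ = ψ :=
  AddMonoidHom.toIntLinearMap_injective (b.ext h)

theorem AddSubgroup.linearIndependent_rat_of_basis {V : Type*} [AddCommGroup V] [Module ℚ V]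
    {G : AddSubgroup V} {ι : Type*} (b : Basis ι ℤ G) :
    LinearIndependent ℚ fun i => (b i : V) :=
  (LinearIndependent.iff_fractionRing ℤ ℚ).mp
    (b.linearIndependent.map' G.subtype.toIntLinearMap (by simp))

theorem AddSubgroup.FG.free {V : Type*} [AddCommGroup V] [Module ℚ V]
    {G : AddSubgroup V} (hG : G.FG) : Module.Free ℤ G := by
  have : IsAddTorsionFree V := .of_module_rat V
  have : Module.Finite ℤ G :=
    Module.Finite.iff_addGroup_fg.mpr ((AddGroup.fg_iff_addSubgroup_fg G).mpr hG)
  infer_instance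

theorem Function.Surjective.exists_section_extending {A V : Type*} {F : A → V}
    (hF : Function.Surjective F) (G : Set V) (σ : G → A) (hσ : ∀ g, F (σ g) = g) :
    ∃ a : V → A, (∀ v, F (a v) = v) ∧ ∀ g : G, a g = σ g := by
  classical
  refine ⟨fun v => if h : v ∈ G then σ ⟨v, h⟩ else Function.surjInv hF v, fun v => ?_, fun g => ?_⟩
  · by_cases h : v ∈ G
    · simp [h, hσ]
    · simp [h, Function.surjInv_eq hF]
  · simp

theorem AddSubgroup.FG.exists_addMonoidHom_section_extending {A V : Type*} [AddCommGroup A]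
    [AddCommGroup V] [Module ℚ V] (F : A →+ V) (hF : Function.Surjective F)
    (hline : ∀ a : A, ∃ ℓ : ℚ →+ A, ℓ 1 = a) {G : AddSubgroup V} (hG : G.FG) (σ : G →+ A)
    (hσ : ∀ g, F (σ g) = g) :
    ∃ σ' : V →+ A, (∀ g : G, σ' g = σ g) ∧ ∀ v, F (σ' v) = v := by
  have := hG.free
  let b := Free.chooseBasis ℤ G
  have hb := (AddSubgroup.linearIndependent_rat_of_basis b).linearIndepOn_id
  let B := Basis.extend hb
  obtain ⟨a, haF, haσ⟩ := hF.exists_section_extending G σ hσ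
  obtain ⟨σ', hσ'⟩ := B.exists_addMonoidHom_apply_eq (fun j => a (B j)) fun j => hline _
  refine ⟨σ', fun g => ?_, fun v => ?_⟩
  · suffices σ'.comp G.subtype = σ from DFunLike.congr_fun this g
    refine b.addMonoidHom_ext_int fun i => ?_
    have hi : (b i : V) ∈ hb.extend (Set.subset_univ _) :=
      hb.subset_extend _ (Set.mem_range_self i)
    have := hσ' ⟨b i, hi⟩
    simp only [B, Basis.extend_apply_self] at this
    simp [this, haσ]
  · suffices F.comp σ' = .id V from DFunLike.congr_fun this v
    exact B.addMonoidHom_ext_rat fun j => by simp [hσ', haF]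

theorem extend_section (V : Type*) [AddCommGroup V] [Module ℚ V]
    (S : Type*) [CommGroup S] (f : S → V)
    (hf_hom : ∀ x y : S, f (x * y) = f x + f y)
    (hf_surj : Function.Surjective f)
    (hroots : ∀ x : S, ∃ r : ℕ+ → S, r 1 = x ∧
      ∀ k l : ℕ+, (r (k * l)) ^ (k : ℕ) = r l)
    (G : AddSubgroup V) (hG : G.FG)
    (s : G → S) (hs_hom : ∀ g g' : G, s (g + g') = s g * s g')
    (hs_sec : ∀ g : G, f (s g) = (g : V)) :
    ∃ s' : V → S,
      (∀ v w : V, s' (v + w) = s' v * s' w) ∧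
      (∀ g : G, s' (g : V) = s g) ∧
      (∀ v : V, f (s' v) = v) := by
  let F : Additive S →+ V := AddMonoidHom.mk' (fun a => f a.toMul) hf_hom
  let σ : G →+ Additive S := AddMonoidHom.mk' (fun g => .ofMul (s g)) hs_hom
  have hline (a : Additive S) : ∃ ℓ : ℚ →+ Additive S, ℓ 1 = a := by
    obtain ⟨r, hr1, hr⟩ := hroots a.toMul
    refine ⟨ratHomOfCoherentRoots (fun n => .ofMul (r n)) fun k l => ?_, ?_⟩
    · rw [← ofMul_pow, hr]
    · rw [ratHomOfCoherentRoots_one, hr1, ofMul_toMul]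
  obtain ⟨σ', hσ'G, hσ'F⟩ := hG.exists_addMonoidHom_section_extending F hf_surj hline σ hs_sec
  exact ⟨fun v => (σ' v).toMul, fun v w => by simp, fun g => congrArg Additive.toMul (hσ'G g), hσ'F⟩
end

section
/- Let V be a ℚ-vector space, S an abelian group, and f : S → V a surjective group homomorphism such that every element of S admits a coherent system of roots. Then S is isomorphic as a group to (ker f) × V. -/
/-!
Over a basis `(b i)` of `V`, lift each `b i` to some `x i ∈ S` with a coherent system of roots
`(r i n)`; then `p / n ↦ (r i n) ^ p` is a well-defined homomorphism from `ℚ` extending `1 ↦ x i`,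
and these homomorphisms assemble to a homomorphic section of `f`, which splits `S`.
-/

open Function

section CoherentRoots

variable {A : Type*} [AddCommGroup A]

def IsCoherentRoots (r : ℕ+ → A) : Prop :=
  ∀ k l : ℕ+, (k : ℕ) • r (k * l) = r l

namespace IsCoherentRoots

variable {r : ℕ+ → A}

theorem zsmul_eq_zsmul (hr : IsCoherentRoots r) {m n : ℕ+} {a b : ℤ} (h : a * n = b * m) :
    a • r m = b • r n := by
  -- both sides equal `(a * n) • r (n * m)`
  have hm : ((n : ℕ) : ℤ) • r (n * m) = r m := by rw [natCast_zsmul]; exact hr n m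
  have hn : ((m : ℕ) : ℤ) • r (n * m) = r n := by rw [mul_comm, natCast_zsmul]; exact hr m n
  rw [← hm, ← hn, smul_smul, smul_smul, h]

theorem num_smul_pnatDen_eq (hr : IsCoherentRoots r) {q : ℚ} {a : ℤ} {n : ℕ+} (hq : q = a / n) :
    q.num • r q.pnatDen = a • r n := by
  refine hr.zsmul_eq_zsmul ?_
  have : (q.num : ℚ) / q.den = a / n := by rw [Rat.num_div_den, hq]
  rw [div_eq_div_iff (by positivity) (by positivity)] at this
  exact_mod_cast this

def ratHom (hr : IsCoherentRoots r) : ℚ →+ A where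
  toFun q := q.num • r q.pnatDen
  map_zero' := by simp
  map_add' p q := by
    have hpq :
        p + q = ((p.num * q.den + q.num * p.den : ℤ) : ℚ) / (p.pnatDen * q.pnatDen : ℕ+) := by
      simp only [PNat.mul_coe, Rat.coe_pnatDen]
      push_cast
      conv_lhs => rw [← Rat.num_div_den p, ← Rat.num_div_den q]
      rw [div_add_div _ _ (by positivity) (by positivity)]
      ring
    have hp : (p.num * q.den) • r (p.pnatDen * q.pnatDen) = p.num • r p.pnatDen :=
      hr.zsmul_eq_zsmul (by simp only [PNat.mul_coe, Rat.coe_pnatDen]; push_cast; ring)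
    have hq : (q.num * p.den) • r (p.pnatDen * q.pnatDen) = q.num • r q.pnatDen :=
      hr.zsmul_eq_zsmul (by simp only [PNat.mul_coe, Rat.coe_pnatDen]; push_cast; ring)
    rw [hr.num_smul_pnatDen_eq hpq, add_smul, hp, hq]

theorem ratHom_one (hr : IsCoherentRoots r) : hr.ratHom 1 = r 1 := by
  simp [ratHom]

end IsCoherentRoots

end CoherentRoots

theorem AddMonoidHom.exists_rightInverse_of_coherentRoots {A V : Type*} [AddCommGroup A]
    [AddCommGroup V] [Module ℚ V] (g : A →+ V)
    (hg : ∀ v : V, ∃ r : ℕ+ → A, IsCoherentRoots r ∧ g (r 1) = v) :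
    ∃ s : V →+ A, RightInverse s g := by
  let b := Module.Basis.ofVectorSpace ℚ V
  choose r hr hgr using fun i => hg (b i)
  let φ i : ℚ →+ A := (hr i).ratHom
  have hgφ (i) (q : ℚ) : g (φ i q) = q • b i := by
    -- additive maps between `ℚ`-vector spaces are `ℚ`-linear
    have := map_rat_smul (g.comp (φ i)) q 1
    rw [smul_eq_mul, mul_one] at this
    rw [← AddMonoidHom.comp_apply, this, AddMonoidHom.comp_apply, (hr i).ratHom_one, hgr]
  refine ⟨(Finsupp.liftAddHom φ).comp b.repr.toAddMonoidHom, fun v => ?_⟩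
  simp only [comp_apply, Finsupp.liftAddHom_apply, map_finsuppSum, hgφ]
  exact b.linearCombination_repr v

namespace MonoidHom

variable {G H : Type*} [CommGroup G] [Group H] (f : G →* H) (s : H →* G) (hs : RightInverse s f)

def projKerOfRightInverse : G →* f.ker :=
  (MonoidHom.id G / s.comp f).codRestrict f.ker fun x => by simp [hs (f x)]

def mulEquivKerProdOfRightInverse : G ≃* f.ker × H :=
  { (f.projKerOfRightInverse s hs).prod f with
    invFun := fun p => p.1 * s p.2
    left_inv := fun x => by simp [projKerOfRightInverse]
    right_inv := fun ⟨k, h⟩ => by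
      have hk : f k = 1 := k.2
      ext <;> simp [projKerOfRightInverse, hk, hs h] }

end MonoidHom

theorem split_via_coherent_roots (V : Type*) [AddCommGroup V] [Module ℚ V]
    (S : Type*) [CommGroup S] (f : S →* Multiplicative V)
    (hf_surj : Function.Surjective f)
    (hroots : ∀ x : S, ∃ r : ℕ+ → S, r 1 = x ∧
      ∀ k l : ℕ+, (r (k * l)) ^ (k : ℕ) = r l) :
    Nonempty (S ≃* f.ker × Multiplicative V) := by
  have hlift (v : V) :
      ∃ r : ℕ+ → Additive S, IsCoherentRoots r ∧ f.toAdditiveLeft (r 1) = v := by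
    obtain ⟨x, hx⟩ := hf_surj (.ofAdd v)
    obtain ⟨r, rfl, hr⟩ := hroots x
    exact ⟨.ofMul ∘ r, fun k l => congrArg Additive.ofMul (hr k l),
      congrArg Multiplicative.toAdd hx⟩
  obtain ⟨s, hs⟩ := f.toAdditiveLeft.exists_rightInverse_of_coherentRoots hlift
  exact ⟨f.mulEquivKerProdOfRightInverse s.toMultiplicativeLeft
    fun v => congrArg Multiplicative.ofAdd (hs v.toAdd)⟩
end
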